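/- arXiv:2309.02629 — 5 statements merged into one kernel-verified Lean document; each statement's English description precedes it below -/
import Mathlib

section
/- For every real α > 0 and all natural numbers i and y, the secant-cut inequality e^{−iα}(1 + i − i·e^{−α}) − e^{−iα}(1 − e^{−α})·y ≤ e^{−αy} holds. (These are the secant cuts of the linearization CSP-L: the secant line of t ↦ e^{−αt} through the points (i, e^{−iα}) and (i+1, e^{−(i+1)α}) is a valid lower bound for e^{−αy} at every integer point y.) -/
/-!
Dividing by `exp (-(i α))` and writing `x = exp (-α)`, `n = y - i ∈ ℤ`, the claim becomes
Bernoulli's inequality `1 + n (x - 1) ≤ x ^ n` for integer exponents: the secant of the convex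
function `t ↦ x ^ t` through `t = 0` and `t = 1` lies below it at every integer.
-/

theorem one_add_mul_sub_one_le_zpow {K : Type*} [Field K] [LinearOrder K] [IsStrictOrderedRing K]
    {x : K} (hx : 0 < x) (n : ℤ) : 1 + n * (x - 1) ≤ x ^ n := by
  obtain ⟨m, rfl | rfl⟩ := Int.eq_nat_or_neg n
  · simpa using one_add_mul_le_pow (by linarith : (-2 : K) ≤ x - 1) m
  · -- `x⁻¹ + x ≥ 2` reduces the negative case to Bernoulli for `x⁻¹`.
    have hinv : 1 - x ≤ x⁻¹ - 1 := by
      nlinarith [mul_inv_cancel₀ hx.ne', mul_nonneg (sq_nonneg (x - 1)) (inv_pos.2 hx).le]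
    calc 1 + ((-m : ℤ) : K) * (x - 1) = 1 + m * (1 - x) := by push_cast; ring
      _ ≤ 1 + m * (x⁻¹ - 1) := by gcongr
      _ ≤ (1 + (x⁻¹ - 1)) ^ m :=
          one_add_mul_le_pow (by linarith [inv_pos.2 hx]) m
      _ = x ^ (-m : ℤ) := by simp

theorem secant_cut_valid_general (α : ℝ) (i y : ℕ) :
    Real.exp (-(i * α)) * (1 + (i : ℝ) - (i : ℝ) * Real.exp (-α))
      - Real.exp (-(i * α)) * (1 - Real.exp (-α)) * (y : ℝ)
    ≤ Real.exp (-(α * y)) := by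
  have hexp : Real.exp (-(α * y)) = Real.exp (-(i * α)) * Real.exp (-α) ^ ((y : ℤ) - i) := by
    rw [← Real.rpow_intCast, ← Real.exp_mul, ← Real.exp_add]
    push_cast
    ring_nf
  calc Real.exp (-(i * α)) * (1 + (i : ℝ) - (i : ℝ) * Real.exp (-α))
        - Real.exp (-(i * α)) * (1 - Real.exp (-α)) * (y : ℝ)
      = Real.exp (-(i * α)) * (1 + (((y : ℤ) - i : ℤ) : ℝ) * (Real.exp (-α) - 1)) := by
        push_cast
        ring
    _ ≤ Real.exp (-(i * α)) * Real.exp (-α) ^ ((y : ℤ) - i) := by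
        gcongr
        exact one_add_mul_sub_one_le_zpow (Real.exp_pos _) _
    _ = Real.exp (-(α * y)) := hexp.symm

/-- The secant cut of `t ↦ exp (-α t)` through the points `(i, exp (-i α))` and
`(i+1, exp (-(i+1) α))` is a valid lower bound for `exp (-α y)` at every natural `y`. -/
theorem secant_cut_valid (α : ℝ) (hα : 0 < α) (i y : ℕ) :
    Real.exp (-(i * α)) * (1 + (i : ℝ) - (i : ℝ) * Real.exp (-α))
      - Real.exp (-(i * α)) * (1 - Real.exp (-α)) * (y : ℝ)
    ≤ Real.exp (-(α * y)) :=
  secant_cut_valid_general α i y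
end

section
/- For every real α > 0 and all natural numbers i and y, equality e^{−iα}(1 + i − i·e^{−α}) − e^{−iα}(1 − e^{−α})·y = e^{−αy} holds if and only if y = i or y = i + 1; for every other natural number y the secant cut is strictly below e^{−αy}. (This expresses where the secant cuts of CSP-L are tight, a consequence of the strict convexity of the exponential function.) -/
/-!
After the substitution `t = -α y`, the secant cut multiplied by `α` is the chord of the strictly
convex function `exp` through `-α (i + 1)` and `-α i`. A chord of a strictly convex function lies
strictly below it outside the chord's interval, and the only natural numbers in `[i, i + 1]` are
its endpoints, where the chord is tight.
-/

open Set

theorem StrictConvexOn.secant_lt_of_notMem_Icc {𝕜 : Type*} [Field 𝕜] [LinearOrder 𝕜]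
    [IsStrictOrderedRing 𝕜] {s : Set 𝕜} {f : 𝕜 → 𝕜} (hf : StrictConvexOn 𝕜 s f) {a b t : 𝕜}
    (ha : a ∈ s) (hb : b ∈ s) (ht : t ∈ s) (hab : a < b) (hout : t ∉ Icc a b) :
    (b - t) * f a + (t - a) * f b < (b - a) * f t := by
  rw [mem_Icc, not_and_or, not_le, not_le] at hout
  rcases hout with hta | hbt
  · linarith [hf.secant_strict_mono_aux1 ht hb hta hab]
  · linarith [hf.secant_strict_mono_aux1 ha ht hab hbt]

/-- The secant cut through `(i, exp (-i α))` and `(i+1, exp (-(i+1) α))` equals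
`exp (-α y)` at a natural number `y` if and only if `y = i` or `y = i + 1`; at every
other natural number it is strictly below `exp (-α y)`. -/
theorem secant_cut_tight_iff (α : ℝ) (hα : 0 < α) (i y : ℕ) :
    (Real.exp (-(i * α)) * (1 + (i : ℝ) - (i : ℝ) * Real.exp (-α))
        - Real.exp (-(i * α)) * (1 - Real.exp (-α)) * (y : ℝ)
      = Real.exp (-(α * y))
      ↔ y = i ∨ y = i + 1) ∧
    (y ≠ i ∧ y ≠ i + 1 →
      Real.exp (-(i * α)) * (1 + (i : ℝ) - (i : ℝ) * Real.exp (-α))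
        - Real.exp (-(i * α)) * (1 - Real.exp (-α)) * (y : ℝ)
      < Real.exp (-(α * y))) := by
  set L := Real.exp (-(i * α)) * (1 + (i : ℝ) - (i : ℝ) * Real.exp (-α))
    - Real.exp (-(i * α)) * (1 - Real.exp (-α)) * (y : ℝ)
  have hexp_succ : Real.exp (-(α * (i + 1))) = Real.exp (-(i * α)) * Real.exp (-α) := by
    rw [← Real.exp_add]; ring_nf
  have hsecant : (-(i * α) - -(α * y)) * Real.exp (-(α * (i + 1)))
      + (-(α * y) - -(α * (i + 1))) * Real.exp (-(i * α)) = (-(i * α) - -(α * (i + 1))) * L := by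
    rw [hexp_succ]; ring
  have hstrict : y ≠ i ∧ y ≠ i + 1 → L < Real.exp (-(α * y)) := by
    rintro ⟨hyi, hyi'⟩
    have hout : -(α * y) ∉ Icc (-(α * (i + 1))) (-(i * α)) := by
      rintro ⟨h₁, h₂⟩
      have : (i : ℝ) ≤ y ∧ (y : ℝ) ≤ i + 1 := ⟨by nlinarith, by nlinarith⟩
      norm_cast at this
      omega
    have hbelow := strictConvexOn_exp.secant_lt_of_notMem_Icc (mem_univ _) (mem_univ _) (mem_univ _)
      (by nlinarith) hout
    rw [hsecant, show -(i * α) - -(α * (i + 1)) = α by ring] at hbelow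
    exact lt_of_mul_lt_mul_left hbelow hα.le
  refine ⟨⟨fun heq => ?_, ?_⟩, hstrict⟩
  · by_contra hne
    exact (hstrict (not_or.mp hne)).ne heq
  · rintro (rfl | rfl)
    · simp only [L]; ring_nf
    · simp only [L]; push_cast; rw [hexp_succ]; ring
end

section
/- Let α > 0 be real and N ≥ 1 a natural number. For every natural number y with y ≤ N, the maximum over i ∈ {0,1,...,N−1} of the secant-cut values e^{−iα}(1 + i − i·e^{−α}) − e^{−iα}(1 − e^{−α})·y equals e^{−αy}. (Hence the N secant cuts indexed i = 0,...,N−1 exactly represent e^{−αy} on integers 0 ≤ y ≤ N, which makes the linearization CSP-L equivalent to SP and shows that the cut indexed i = N is unnecessary.) -/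
/-!
The function `t ↦ exp (-α t)` is convex, and a secant line of a convex function lies below the
function outside the chord interval. An integer point `y` never lies strictly inside `(i, i + 1)`,
so every secant cut is at most `exp (-α y)` there; the cut indexed by `y` (or by `N - 1` when
`y = N`) passes through `(y, exp (-α y))`.
-/

open Real Set

section Secant

variable {𝕜 : Type*} [Field 𝕜] [LinearOrder 𝕜] [IsStrictOrderedRing 𝕜] {s : Set 𝕜} {f : 𝕜 → 𝕜}

theorem ConvexOn.secant_le_of_notMem_Ioo (hf : ConvexOn 𝕜 s f) {a b t : 𝕜} (ha : a ∈ s)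
    (hb : b ∈ s) (ht : t ∈ s) (hab : a < b) (htab : t ∉ Ioo a b) :
    f a + (f b - f a) / (b - a) * (t - a) ≤ f t := by
  rcases lt_trichotomy t a with hta | rfl | hat
  · have hslope := hf.secant_mono ha ht hb hta.ne hab.ne' (hta.trans hab).le
    rw [div_le_iff_of_neg (sub_neg.mpr hta)] at hslope
    linarith
  · simp
  · have hbt : b ≤ t := not_lt.mp fun htb => htab ⟨hat, htb⟩
    have hslope := hf.secant_mono ha hb ht hab.ne' hat.ne' hbt
    rw [le_div_iff₀ (sub_pos.mpr hat)] at hslope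
    linarith

theorem Int.cast_notMem_Ioo_add_one (i y : ℤ) : (y : 𝕜) ∉ Ioo (i : 𝕜) (i + 1) := by
  rintro ⟨hiy, hyi⟩
  have hiy' : i < y := Int.cast_lt.mp hiy
  have hyi' : y < i + 1 := by exact_mod_cast hyi
  omega

theorem ConvexOn.secant_add_one_le_of_int (hf : ConvexOn 𝕜 s f) {i y : ℤ} (hi : (i : 𝕜) ∈ s)
    (hi' : (i + 1 : 𝕜) ∈ s) (hy : (y : 𝕜) ∈ s) :
    f i + (f (i + 1) - f i) * (y - i) ≤ f y := by
  simpa using hf.secant_le_of_notMem_Ioo hi hi' hy (lt_add_one _) (Int.cast_notMem_Ioo_add_one i y)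

end Secant

theorem convexOn_exp_neg_mul (α : ℝ) : ConvexOn ℝ univ fun t => exp (-(α * t)) := by
  simpa [Function.comp_def] using convexOn_exp.comp_linearMap (LinearMap.mulLeft ℝ (-α))

theorem secant_cuts_exact_general (α : ℝ) (N : ℕ) (hN : 1 ≤ N)
    (y : ℕ) (hy : y ≤ N) :
    IsGreatest
      {v : ℝ | ∃ i < N,
        v = Real.exp (-(i * α)) * (1 + (i : ℝ) - (i : ℝ) * Real.exp (-α))
            - Real.exp (-(i * α)) * (1 - Real.exp (-α)) * (y : ℝ)}
      (Real.exp (-(α * y))) := by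
  have hcut (i : ℕ) : exp (-(i * α)) * (1 + (i : ℝ) - i * exp (-α))
      - exp (-(i * α)) * (1 - exp (-α)) * y
      = exp (-(α * i)) + (exp (-(α * (i + 1))) - exp (-(α * i))) * (y - i) := by
    rw [show -(α * (i + 1)) = -(i * α) + -α by ring, exp_add, mul_comm α]
    ring
  refine ⟨?_, ?_⟩
  · obtain ⟨i, hi, hyi⟩ : ∃ i < N, (y : ℝ) = i ∨ (y : ℝ) = i + 1 := by
      rcases hy.lt_or_eq with hyN | rfl
      · exact ⟨y, hyN, Or.inl rfl⟩
      · exact ⟨y - 1, by omega, Or.inr (by rw [Nat.cast_sub hN]; ring)⟩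
    refine ⟨i, hi, ?_⟩
    rw [hcut]
    rcases hyi with h | h <;> rw [h] <;> ring
  · rintro v ⟨i, -, rfl⟩
    rw [hcut]
    simpa using (convexOn_exp_neg_mul α).secant_add_one_le_of_int (i := i) (y := y)
      (mem_univ _) (mem_univ _) (mem_univ _)

/-- For `y ≤ N`, the maximum over `i ∈ {0,…,N-1}` of the secant-cut values equals
`exp (-α y)`: the `N` secant cuts indexed `i = 0,…,N-1` exactly represent `exp (-α y)`
on the integers `0 ≤ y ≤ N`. -/
theorem secant_cuts_exact (α : ℝ) (hα : 0 < α) (N : ℕ) (hN : 1 ≤ N)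
    (y : ℕ) (hy : y ≤ N) :
    IsGreatest
      {v : ℝ | ∃ i < N,
        v = Real.exp (-(i * α)) * (1 + (i : ℝ) - (i : ℝ) * Real.exp (-α))
            - Real.exp (-(i * α)) * (1 - Real.exp (-α)) * (y : ℝ)}
      (Real.exp (-(α * y))) :=
  secant_cuts_exact_general α N hN y hy
end

section
/- Suppose p is a probability vector (p(e) ≥ 0 for all e ∈ E and Σ_{e∈E} p(e) = 1) and each transition matrix γ_t is row-stochastic (γ_t(e,e') ≥ 0 and Σ_{e'∈E} γ_t(e,e') = 1 for every e ∈ E and every t ∈ {1,...,T−1}). Then the overall non-detection probability satisfies the identity Σ_{ω∈E^T} q(ω) · Π_{t=1}^{T} u(ω_t, t) = 1 − Σ_{t=1}^{T} Σ_{e∈E} P(e,t) · (1 − u(e,t)). (This identity establishes that the objective of the Markovian linearization MSP, computed through the recursively defined information state P, equals the probability of non-detection of SP.) -/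
/-- For a probability vector `p`, row-stochastic transition matrices `γ t`
(`t = 1,…,T-1`), non-detection factors `u`, and the information state `P` defined by
`P e 1 = p e` and `P e (t+1) = ∑ e', γ t e' e * P e' t * u e' t`, the overall
non-detection probability satisfies
`∑ paths ω, q ω * ∏_{t=1}^T u (ω t) t = 1 - ∑_{t=1}^T ∑ e, P e t * (1 - u e t)`. -/
theorem msp_objective_identity {E : Type*} [Fintype E] (T : ℕ) (hT : 0 < T)
    (p : E → ℝ) (hp : ∀ e, 0 ≤ p e) (hpsum : ∑ e, p e = 1)
    (γ : ℕ → E → E → ℝ)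
    (hγ0 : ∀ t, 1 ≤ t → t ≤ T - 1 → ∀ e e', 0 ≤ γ t e e')
    (hγ1 : ∀ t, 1 ≤ t → t ≤ T - 1 → ∀ e, ∑ e', γ t e e' = 1)
    (u : E → ℕ → ℝ)
    (hu : ∀ e t, 1 ≤ t → t ≤ T → 0 ≤ u e t ∧ u e t ≤ 1)
    (P : E → ℕ → ℝ)
    (hP1 : ∀ e, P e 1 = p e)
    (hPrec : ∀ t, 1 ≤ t → t ≤ T - 1 → ∀ e,
      P e (t + 1) = ∑ e', γ t e' e * P e' t * u e' t) :
    ∑ ω : Fin T → E,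
      (p (ω ⟨0, hT⟩) *
        ∏ t : Fin (T - 1),
          γ (t.val + 1) (ω (Fin.castLE (Nat.sub_le T 1) t))
            (ω ⟨t.val + 1, Nat.add_lt_of_lt_sub t.isLt⟩)) *
      ∏ t : Fin T, u (ω t) (t.val + 1)
    = 1 - ∑ t ∈ Finset.Icc 1 T, ∑ e, P e t * (1 - u e t) := by
  obtain ⟨m, rfl⟩ : ∃ m, T = m + 1 := ⟨T - 1, (Nat.succ_pred_eq_of_pos hT).symm⟩
  simp only [Nat.add_sub_cancel] at hγ1 hPrec
  -- key lemma: path-sum representation of the information state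
  have key : ∀ n, n ≤ m → ∀ g : E → ℝ,
      (∑ ω : Fin (n + 1) → E,
        (p (ω 0) * ∏ t : Fin n,
          γ (t.val + 1) (ω t.castSucc) (ω t.succ) * u (ω t.castSucc) (t.val + 1)) *
          g (ω (Fin.last n)))
      = ∑ e, P e (n + 1) * g e := by
    intro n
    induction n with
    | zero =>
      intro _ g
      rw [← Equiv.sum_comp (Equiv.funUnique (Fin 1) E).symm]
      simp [hP1]
    | succ n ih =>
      intro hn g
      rw [← Equiv.sum_comp (Fin.insertNthEquiv (fun _ => E) (Fin.last (n + 1))),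
        Fintype.sum_prod_type]
      have hsnoc0 : ∀ (ρ : Fin (n + 1) → E) (x : E), (Fin.snoc ρ x : Fin (n + 2) → E) 0 = ρ 0 := by
        intro ρ x
        simpa using Fin.snoc_castSucc (α := fun _ => E) x ρ 0
      have step : ∀ (x : E) (ρ : Fin (n + 1) → E),
          ((p ((Fin.insertNthEquiv (fun _ => E) (Fin.last (n + 1))) (x, ρ) 0) *
            ∏ t : Fin (n + 1),
              γ (t.val + 1) ((Fin.insertNthEquiv (fun _ => E) (Fin.last (n + 1))) (x, ρ) t.castSucc)
                ((Fin.insertNthEquiv (fun _ => E) (Fin.last (n + 1))) (x, ρ) t.succ) *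
              u ((Fin.insertNthEquiv (fun _ => E) (Fin.last (n + 1))) (x, ρ) t.castSucc) (t.val + 1)) *
            g ((Fin.insertNthEquiv (fun _ => E) (Fin.last (n + 1))) (x, ρ) (Fin.last (n + 1))))
          = (p (ρ 0) * ∏ t : Fin n,
              γ (t.val + 1) (ρ t.castSucc) (ρ t.succ) * u (ρ t.castSucc) (t.val + 1)) *
            (γ (n + 1) (ρ (Fin.last n)) x * u (ρ (Fin.last n)) (n + 1) * g x) := by
        intro x ρ
        have heq : (Fin.insertNthEquiv (fun _ => E) (Fin.last (n + 1))) (x, ρ) = Fin.snoc ρ x := by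
          simp [Fin.insertNthEquiv, Fin.insertNth_last]
        rw [heq, Fin.prod_univ_castSucc]
        simp only [hsnoc0, Fin.succ_castSucc, Fin.snoc_castSucc, Fin.succ_last,
          Fin.snoc_last, Fin.val_last, Fin.coe_castSucc]
        ring
      simp only [step]
      have inner : ∀ x : E,
          (∑ ρ : Fin (n + 1) → E,
            (p (ρ 0) * ∏ t : Fin n,
              γ (t.val + 1) (ρ t.castSucc) (ρ t.succ) * u (ρ t.castSucc) (t.val + 1)) *
            (γ (n + 1) (ρ (Fin.last n)) x * u (ρ (Fin.last n)) (n + 1) * g x))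
          = ∑ e, P e (n + 1) * (γ (n + 1) e x * u e (n + 1) * g x) :=
        fun x => ih (Nat.le_of_succ_le hn) (fun e => γ (n + 1) e x * u e (n + 1) * g x)
      simp only [inner]
      simp only [hPrec (n + 1) (by omega) hn]
      refine Finset.sum_congr rfl fun x _ => ?_
      rw [Finset.sum_mul]
      exact Finset.sum_congr rfl fun e _ => by ring
  -- telescoping identity for the right-hand side
  have tel : ∀ n, n ≤ m → ∑ t ∈ Finset.Icc 1 (n + 1), ∑ e, P e t * (1 - u e t)
      = 1 - ∑ e, P e (n + 1) * u e (n + 1) := by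
    intro n
    induction n with
    | zero =>
      intro _
      simp [hP1, mul_sub, Finset.sum_sub_distrib, hpsum]
    | succ n ih =>
      intro hn
      rw [Finset.sum_Icc_succ_top (by omega), ih (by omega)]
      have hsum : ∑ e, P e (n + 1 + 1) = ∑ e, P e (n + 1) * u e (n + 1) := by
        simp only [hPrec (n + 1) (by omega) hn]
        rw [Finset.sum_comm]
        refine Finset.sum_congr rfl fun e _ => ?_
        calc ∑ e', γ (n + 1) e e' * P e (n + 1) * u e (n + 1)
            = (∑ e', γ (n + 1) e e') * (P e (n + 1) * u e (n + 1)) := by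
              rw [Finset.sum_mul]
              exact Finset.sum_congr rfl fun _ _ => by ring
          _ = P e (n + 1) * u e (n + 1) := by
              rw [hγ1 (n + 1) (by omega) hn, one_mul]
      simp only [mul_sub, mul_one, Finset.sum_sub_distrib]
      rw [hsum]
      ring
  rw [tel m le_rfl, sub_sub_cancel]
  have hA : (∑ ω : Fin (m + 1) → E,
      (p (ω 0) * ∏ t : Fin m,
        γ (t.val + 1) (ω t.castSucc) (ω t.succ) * u (ω t.castSucc) (t.val + 1)) *
        u (ω (Fin.last m)) (m + 1))
      = ∑ e, P e (m + 1) * u e (m + 1) := key m le_rfl (fun e => u e (m + 1))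
  rw [← hA]
  refine Finset.sum_congr rfl fun ω _ => ?_
  have h0 : (⟨0, hT⟩ : Fin (m + 1)) = 0 := rfl
  rw [h0, Fin.prod_univ_castSucc (f := fun t : Fin (m + 1) => u (ω t) (t.val + 1)),
    Finset.prod_mul_distrib]
  simp only [Fin.val_last, Fin.coe_castSucc]
  have hγprod : (∏ t : Fin (m + 1 - 1),
        γ (t.val + 1) (ω (Fin.castLE (Nat.sub_le (m + 1) 1) t))
          (ω ⟨t.val + 1, Nat.add_lt_of_lt_sub t.isLt⟩))
      = ∏ t : Fin m, γ (t.val + 1) (ω t.castSucc) (ω t.succ) := rfl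
  rw [hγprod]
  ring
end

section
/- Let E = S × {0,1} where S is a finite set of spatial states and the second component is the camouflage mode, and let α > 0. For a search-effort function z : S × {1,...,T} → ℝ define non-detection factors u_z((s,c), t) = exp(−α_c · z(s,t)) with α_0 = α and α_1 = 0, and let f(z) = Σ_{ω∈E^T} q(ω) · Π_{t=1}^{T} u_z(ω_t, t). Let r(·,·; z) and r̄(·,·; z) be the forward and backward quantities defined from u_z by r((s,c),1; z) = p(s,c), r((s,c),t; z) = Σ_{(s',c')∈E} r((s',c'),t−1; z) · γ_{t−1}((s',c'),(s,c)) · u_z((s',c'),t−1), and r̄((s,c),T; z) = 1, r̄((s,c),t; z) = Σ_{(s',c')∈E} r̄((s',c'),t+1; z) · γ_t((s,c),(s',c')) · u_z((s',c'),t+1). Then for every s ∈ S and t ∈ {1,...,T}, increasing the search effort in state s at period t by one unit changes the non-detection probability by f(z + 1_{(s,t)}) − f(z) = r((s,0),t; z) · (e^{−α(z(s,t)+1)} − e^{−α z(s,t)}) · r̄((s,0),t; z), where z + 1_{(s,t)} agrees with z except that its (s,t) entry is z(s,t)+1. (This is the formula used to compute the coefficients of the secant cuts in the cutting plane algorithms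 for a camouflaging target: only the non-camouflaged copy (s,0) of state s contributes, because the detection rate is zero when the target is camouflaged.) -/
/-!
For every time `1 ≤ t ≤ T` the path sum factorises as `∑ e, r e t * u e t * rbar e t`: at `t = 1`
this holds because `rbar e 1` is the total weight of all continuations of a path started in `e`,
and the two recursions make the pairing independent of `t`. Since `r · t` only involves the factors
`u` at times before `t` and `rbar · t` only those after `t`, raising the effort at `(s, t)` changes
only the factors `u (s, c) t`, and of these only `c = false` moves because `α_true = 0`.
-/

open Finset

namespace ForwardBackward

variable {E : Type*}

/-- The weight of the path `e, ω 0, …, ω (k - 1)` at times `m, m + 1, …, m + k`, excluding `u e m`. -/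
def weightFrom (γ : ℕ → E → E → ℝ) (u : E → ℕ → ℝ) (m : ℕ) (e : E) {k : ℕ} (ω : Fin k → E) : ℝ :=
  ∏ i : Fin k, γ (i + m) ((Fin.cons e ω : Fin (k + 1) → E) i.castSucc) (ω i) * u (ω i) (i + m + 1)

theorem weightFrom_cons {γ : ℕ → E → E → ℝ} {u : E → ℕ → ℝ} (m : ℕ) (e e' : E) {k : ℕ}
    (ω : Fin k → E) :
    weightFrom γ u m e (Fin.cons e' ω : Fin (k + 1) → E)
      = γ m e e' * u e' (m + 1) * weightFrom γ u (m + 1) e' ω := by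
  rw [weightFrom, Fin.prod_univ_succ, weightFrom]
  simp only [Fin.val_zero, zero_add, Fin.castSucc_zero, Fin.cons_zero, ← Fin.succ_castSucc,
    Fin.cons_succ, Fin.val_succ, add_assoc, add_comm 1 m]

variable [Fintype E] (T : ℕ) (p : E → ℝ) (γ : ℕ → E → E → ℝ) (u : E → ℕ → ℝ)

structure IsForward (r : E → ℕ → ℝ) : Prop where
  init : ∀ e, r e 1 = p e
  step : ∀ t, 2 ≤ t → t ≤ T → ∀ e, r e t = ∑ e', r e' (t - 1) * γ (t - 1) e' e * u e' (t - 1)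

structure IsBackward (b : E → ℕ → ℝ) : Prop where
  last : ∀ e, b e T = 1
  step : ∀ t, 1 ≤ t → t ≤ T - 1 → ∀ e, b e t = ∑ e', b e' (t + 1) * γ t e e' * u e' (t + 1)

/-- Entry `i` of a path `ω : Fin T → E` is the state at time `i + 1`. -/
def pathSum (hT : 0 < T) : ℝ :=
  ∑ ω : Fin T → E,
    (p (ω ⟨0, hT⟩) *
      ∏ t' : Fin (T - 1),
        γ (t'.val + 1) (ω (Fin.castLE (Nat.sub_le T 1) t'))
          (ω ⟨t'.val + 1, Nat.add_lt_of_lt_sub t'.isLt⟩)) *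
    ∏ t' : Fin T, u (ω t') (t'.val + 1)

variable {T p γ u}

theorem sum_weightFrom_succ (m : ℕ) (e : E) (k : ℕ) :
    ∑ ω : Fin (k + 1) → E, weightFrom γ u m e ω
      = ∑ e', γ m e e' * u e' (m + 1) * ∑ ω : Fin k → E, weightFrom γ u (m + 1) e' ω := by
  rw [← (Fin.consEquiv fun _ => E).sum_comp, Fintype.sum_prod_type]
  refine sum_congr rfl fun e' _ => ?_
  rw [mul_sum]
  exact sum_congr rfl fun ω _ => weightFrom_cons m e e' ω

theorem IsBackward.eq_sum_weightFrom {b : E → ℕ → ℝ} (hb : IsBackward T γ u b) :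
    ∀ k < T, ∀ e, b e (T - k) = ∑ ω : Fin k → E, weightFrom γ u (T - k) e ω
  | 0, _, e => by simp [hb.last, weightFrom]
  | k + 1, hk, e => by
    have hsucc : T - (k + 1) + 1 = T - k := by omega
    rw [hb.step _ (by omega) (by omega), sum_weightFrom_succ, hsucc]
    refine sum_congr rfl fun e' _ => ?_
    rw [hb.eq_sum_weightFrom k (by omega) e']
    ring

theorem pathSum_eq_sum_backward (hT : 0 < T) {b : E → ℕ → ℝ} (hb : IsBackward T γ u b) :
    pathSum T p γ u hT = ∑ e, p e * u e 1 * b e 1 := by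
  obtain ⟨n, rfl⟩ : ∃ n, T = n + 1 := ⟨T - 1, by omega⟩
  have hb1 := hb.eq_sum_weightFrom n (by omega)
  simp only [Nat.add_sub_cancel_left] at hb1
  rw [pathSum, ← (Fin.consEquiv fun _ => E).sum_comp, Fintype.sum_prod_type]
  refine sum_congr rfl fun e _ => ?_
  rw [hb1, mul_sum]
  refine sum_congr rfl fun ω _ => ?_
  rw [Fin.prod_univ_succ]
  simp only [Fin.consEquiv_apply, weightFrom, Fin.cons_zero, Fin.cons_succ, Fin.val_zero,
    Fin.val_succ, zero_add, prod_mul_distrib]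
  rw [mul_mul_mul_comm]
  rfl

theorem sum_forward_backward_succ {r b : E → ℕ → ℝ} (hr : IsForward T p γ u r)
    (hb : IsBackward T γ u b) {m : ℕ} (hm : 1 ≤ m) (hmT : m + 1 ≤ T) :
    ∑ e, r e (m + 1) * u e (m + 1) * b e (m + 1) = ∑ e, r e m * u e m * b e m := by
  simp only [hr.step (m + 1) (by omega) hmT, Nat.add_sub_cancel, sum_mul]
  rw [sum_comm]
  refine sum_congr rfl fun e _ => ?_
  rw [hb.step m hm (by omega) e, mul_sum]
  exact sum_congr rfl fun e' _ => by ring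

theorem sum_forward_backward_eq {r b : E → ℕ → ℝ} (hr : IsForward T p γ u r)
    (hb : IsBackward T γ u b) {m : ℕ} (hm : 1 ≤ m) (hmT : m ≤ T) :
    ∑ e, r e m * u e m * b e m = ∑ e, p e * u e 1 * b e 1 := by
  induction m, hm using Nat.le_induction with
  | base => simp only [hr.init]
  | succ m hm ih => rw [sum_forward_backward_succ hr hb hm hmT, ih (by omega)]

theorem pathSum_eq_sum_forward_backward (hT : 0 < T) {r b : E → ℕ → ℝ}
    (hr : IsForward T p γ u r) (hb : IsBackward T γ u b) {t : ℕ} (ht : 1 ≤ t) (htT : t ≤ T) :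
    pathSum T p γ u hT = ∑ e, r e t * u e t * b e t := by
  rw [pathSum_eq_sum_backward hT hb, sum_forward_backward_eq hr hb ht htT]

theorem IsForward.eq_of_agree_before {u' r r' : E → ℕ → ℝ} (hr : IsForward T p γ u r)
    (hr' : IsForward T p γ u' r') {t : ℕ} (hu : ∀ e m, m < t → u' e m = u e m) (htT : t ≤ T) :
    ∀ m, 1 ≤ m → m ≤ t → ∀ e, r' e m = r e m := by
  intro m hm hmt
  induction m, hm using Nat.le_induction with
  | base => simp [hr.init, hr'.init]
  | succ m hm ih =>
    intro e
    rw [hr.step _ (by omega) (by omega), hr'.step _ (by omega) (by omega)]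
    refine sum_congr rfl fun e' _ => ?_
    rw [Nat.add_sub_cancel, ih (by omega), hu e' m (by omega)]

theorem IsBackward.eq_of_agree_after {u' b b' : E → ℕ → ℝ} (hb : IsBackward T γ u b)
    (hb' : IsBackward T γ u' b') {t : ℕ} (hu : ∀ e m, t < m → u' e m = u e m) (ht : 1 ≤ t) :
    ∀ m, t ≤ m → m ≤ T → ∀ e, b' e m = b e m := by
  intro m htm hmT
  induction hmT using Nat.decreasingInduction with
  | self => simp [hb.last, hb'.last]
  | of_succ m hm ih =>
    intro e
    rw [hb.step _ (by omega) (by omega), hb'.step _ (by omega) (by omega)]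
    refine sum_congr rfl fun e' _ => ?_
    rw [ih (by omega), hu e' (m + 1) (by omega)]

theorem pathSum_sub_pathSum (hT : 0 < T) {u' r r' b b' : E → ℕ → ℝ}
    (hr : IsForward T p γ u r) (hr' : IsForward T p γ u' r')
    (hb : IsBackward T γ u b) (hb' : IsBackward T γ u' b') {t : ℕ}
    (hu : ∀ e m, m ≠ t → u' e m = u e m) (ht : 1 ≤ t) (htT : t ≤ T) :
    pathSum T p γ u' hT - pathSum T p γ u hT = ∑ e, r e t * (u' e t - u e t) * b e t := by
  rw [pathSum_eq_sum_forward_backward hT hr' hb' ht htT,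
    pathSum_eq_sum_forward_backward hT hr hb ht htT, ← sum_sub_distrib]
  refine sum_congr rfl fun e _ => ?_
  rw [hr.eq_of_agree_before hr' (fun e m hm => hu e m hm.ne) htT t ht le_rfl,
    hb.eq_of_agree_after hb' (fun e m hm => hu e m hm.ne') ht t le_rfl htT]
  ring

end ForwardBackward

open ForwardBackward

theorem camouflage_secant_coefficient_general {S : Type*} [Fintype S] [DecidableEq S]
    (T : ℕ) (hT : 0 < T) (α : ℝ)
    (p : S × Bool → ℝ) (γ : ℕ → S × Bool → S × Bool → ℝ)
    (u : (S → ℕ → ℝ) → S × Bool → ℕ → ℝ)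
    (hu : ∀ z sc t, u z sc t = Real.exp (-((if sc.2 then (0 : ℝ) else α) * z sc.1 t)))
    (f : (S → ℕ → ℝ) → ℝ)
    (hf : ∀ z, f z =
      ∑ ω : Fin T → S × Bool,
        (p (ω ⟨0, hT⟩) *
          ∏ t' : Fin (T - 1),
            γ (t'.val + 1) (ω (Fin.castLE (Nat.sub_le T 1) t'))
              (ω ⟨t'.val + 1, Nat.add_lt_of_lt_sub t'.isLt⟩)) *
        ∏ t' : Fin T, u z (ω t') (t'.val + 1))
    (r rbar : (S → ℕ → ℝ) → S × Bool → ℕ → ℝ)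
    (hr1 : ∀ z sc, r z sc 1 = p sc)
    (hrrec : ∀ z t, 2 ≤ t → t ≤ T → ∀ sc,
      r z sc t = ∑ sc', r z sc' (t - 1) * γ (t - 1) sc' sc * u z sc' (t - 1))
    (hrbarT : ∀ z sc, rbar z sc T = 1)
    (hrbarrec : ∀ z t, 1 ≤ t → t ≤ T - 1 → ∀ sc,
      rbar z sc t = ∑ sc', rbar z sc' (t + 1) * γ t sc sc' * u z sc' (t + 1))
    (z : S → ℕ → ℝ) (s : S) (t : ℕ) (ht1 : 1 ≤ t) (htT : t ≤ T) :
    f (fun s' t' => if s' = s ∧ t' = t then z s' t' + 1 else z s' t') - f z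
      = r z (s, false) t *
        (Real.exp (-(α * (z s t + 1))) - Real.exp (-(α * z s t))) *
        rbar z (s, false) t := by
  set z' : S → ℕ → ℝ := fun s' t' => if s' = s ∧ t' = t then z s' t' + 1 else z s' t'
  have hpath : ∀ w, f w = pathSum T p γ (u w) hT := hf
  have hu_off : ∀ e m, (e, m) ≠ ((s, false), t) → u z' e m = u z e m := by
    rintro ⟨s', (_ | _)⟩ m h
    · have hz : z' s' m = z s' m := if_neg fun h' => h (by rw [h'.1, h'.2])
      rw [hu, hu, hz]
    · simp only [hu, if_true, zero_mul]
  have hdiff := pathSum_sub_pathSum hT ⟨hr1 z, hrrec z⟩ ⟨hr1 z', hrrec z'⟩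
    ⟨hrbarT z, hrbarrec z⟩ ⟨hrbarT z', hrbarrec z'⟩ (fun e m hm => hu_off e m (by simp [hm])) ht1 htT
  rw [hpath, hpath, hdiff, sum_eq_single (s, false) (fun e _ he => by
    rw [hu_off e t (by simpa using he), sub_self, mul_zero, zero_mul]) (by simp)]
  simp only [hu, z', and_self, if_true, Bool.false_eq_true, if_false]

/-- Secant-cut coefficient formula for a camouflaging target: with target states
`E = S × Bool` (second component = camouflage mode), non-detection factors
`u z (s,c) t = exp (-α_c * z s t)` where `α_false = α` and `α_true = 0`, objective
`f z = ∑ paths ω, q ω * ∏_{t'=1}^T u z (ω t') t'`, and forward/backward quantities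
`r`, `r̄` defined from `u z`, increasing the search effort at `(s,t)` by one unit gives
`f (z + 1_{(s,t)}) - f z
  = r z (s,0) t * (exp (-α (z s t + 1)) - exp (-α (z s t))) * r̄ z (s,0) t`. -/
theorem camouflage_secant_coefficient {S : Type*} [Fintype S] [DecidableEq S]
    (T : ℕ) (hT : 0 < T) (α : ℝ) (hα : 0 < α)
    (p : S × Bool → ℝ) (γ : ℕ → S × Bool → S × Bool → ℝ)
    (u : (S → ℕ → ℝ) → S × Bool → ℕ → ℝ)
    (hu : ∀ z sc t, u z sc t = Real.exp (-((if sc.2 then (0 : ℝ) else α) * z sc.1 t)))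
    (f : (S → ℕ → ℝ) → ℝ)
    (hf : ∀ z, f z =
      ∑ ω : Fin T → S × Bool,
        (p (ω ⟨0, hT⟩) *
          ∏ t' : Fin (T - 1),
            γ (t'.val + 1) (ω (Fin.castLE (Nat.sub_le T 1) t'))
              (ω ⟨t'.val + 1, Nat.add_lt_of_lt_sub t'.isLt⟩)) *
        ∏ t' : Fin T, u z (ω t') (t'.val + 1))
    (r rbar : (S → ℕ → ℝ) → S × Bool → ℕ → ℝ)
    (hr1 : ∀ z sc, r z sc 1 = p sc)
    (hrrec : ∀ z t, 2 ≤ t → t ≤ T → ∀ sc,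
      r z sc t = ∑ sc', r z sc' (t - 1) * γ (t - 1) sc' sc * u z sc' (t - 1))
    (hrbarT : ∀ z sc, rbar z sc T = 1)
    (hrbarrec : ∀ z t, 1 ≤ t → t ≤ T - 1 → ∀ sc,
      rbar z sc t = ∑ sc', rbar z sc' (t + 1) * γ t sc sc' * u z sc' (t + 1))
    (z : S → ℕ → ℝ) (s : S) (t : ℕ) (ht1 : 1 ≤ t) (htT : t ≤ T) :
    f (fun s' t' => if s' = s ∧ t' = t then z s' t' + 1 else z s' t') - f z
      = r z (s, false) t *
        (Real.exp (-(α * (z s t + 1))) - Real.exp (-(α * z s t))) *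
        rbar z (s, false) t :=
  camouflage_secant_coefficient_general T hT α p γ u hu f hf r rbar hr1 hrrec hrbarT hrbarrec z s t
    ht1 htT
end
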